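/- Assume σ is a d-dimensional simplicial cone, i.e. n = d and v_1, …, v_d are linearly independent. Let A, B ⊆ σ^∨ ∩ ℤ^d be finite nonempty sets such that σ^∨ \ Q(B) is bounded, and let ∂Q(B) denote the topological boundary of Q(B) in the subspace topology of σ^∨. Then sup_{u ∈ σ^∨ \ Q(B)} λ_A(u) = sup_{u ∈ ∂Q(B)} λ_A(u). -/

import Mathlib

open Finset Filter Pointwise

noncomputable section

namespace Paper

variable {d n : ℕ}

/-- The standard inner product pairing on `ℝ^d`. -/
def pair (u w : Fin d → ℝ) : ℝ := ∑ i, u i * w i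

/-- The coercion `ℤ^d → ℝ^d`. -/
def toR (u : Fin d → ℤ) : Fin d → ℝ := fun i => (u i : ℝ)

/-- The cone generated by the integer vectors `v 1, …, v n`. -/
def cone (v : Fin n → Fin d → ℤ) : Set (Fin d → ℝ) :=
  {x | ∃ c : Fin n → ℝ, (∀ j, 0 ≤ c j) ∧ x = ∑ j, c j • toR (v j)}

/-- The dual cone `σ^∨ = {u | ⟨u, x⟩ ≥ 0 for all x ∈ σ}`. -/
def dualCone (v : Fin n → Fin d → ℤ) : Set (Fin d → ℝ) :=
  {u | ∀ x ∈ cone v, 0 ≤ pair u x}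

/-- Strong convexity of the cone generated by `v`. -/
def StronglyConvex (v : Fin n → Fin d → ℤ) : Prop :=
  ∀ x ∈ cone v, -x ∈ cone v → x = 0

/-- An integer vector is primitive if the gcd of its coordinates is 1. -/
def IsPrimitive (w : Fin d → ℤ) : Prop := Finset.univ.gcd w = 1

/-- The cone generated by `v` is `d`-dimensional. -/
def FullDim (v : Fin n → Fin d → ℤ) : Prop :=
  Submodule.span ℝ (Set.range fun j => toR (v j)) = ⊤

/-- The Newton polyhedron `P(A) = conv(A) + σ^∨`. -/
def newton (v : Fin n → Fin d → ℤ) (A : Finset (Fin d → ℤ)) : Set (Fin d → ℝ) :=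
  convexHull ℝ (toR '' ↑A) + dualCone v

/-- The set `Q(A) = ⋃_{a ∈ A} (a + σ^∨)`. -/
def QSet (v : Fin n → Fin d → ℤ) (A : Finset (Fin d → ℤ)) : Set (Fin d → ℝ) :=
  ⋃ a ∈ A, (toR a +ᵥ dualCone v)

/-- `λ_A(u) = sup {λ > 0 | u ∈ λ·P(A)}` (and `0` if no such `λ` exists;
note `Real.sSup` of the empty set is `0`). -/
def lam (v : Fin n → Fin d → ℤ) (A : Finset (Fin d → ℤ)) (u : Fin d → ℝ) : ℝ :=
  sSup {l : ℝ | 0 < l ∧ u ∈ l • newton v A}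

/-- `Q(m)` for the maximal monomial ideal, whose exponent set is
`(σ^∨ ∩ ℤ^d) \ {0}`. -/
def Qm (v : Fin n → Fin d → ℤ) : Set (Fin d → ℝ) :=
  ⋃ a ∈ {a : Fin d → ℤ | toR a ∈ dualCone v ∧ a ≠ 0}, (toR a +ᵥ dualCone v)

/-- The set `O = {u ∈ σ^∨ | ⟨u, v_j⟩ ≥ 1 for some j}`. -/
def OSet (v : Fin n → Fin d → ℤ) : Set (Fin d → ℝ) :=
  {u ∈ dualCone v | ∃ j, 1 ≤ pair u (toR (v j))}


/-- The topological boundary of `s` inside `X`, with respect to the subspace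
topology on `X`. -/
def boundaryIn (X s : Set (Fin d → ℝ)) : Set (Fin d → ℝ) :=
  X ∩ closure s ∩ closure (X \ s)


/-!
Pushing a point `u ∈ σ^∨ \ Q(B)` along a vector `e` with `⟨e, v_j⟩ = 1` for all `j` until it
first meets the closed set `Q(B)` lands on `∂Q(B)` (boundedness of `σ^∨ \ Q(B)` makes the ray
meet `Q(B)`), and it can only increase `λ_A` because `l • P(A) + σ^∨ = l • P(A)`. Conversely,
`λ_A` is upper semicontinuous on `σ^∨`: if `p = l • a + w` with `a ∈ conv A`, `w ∈ σ^∨` and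
`c < l`, then for each `j` either `⟨a, v_j⟩ = 0`, so `⟨x - c • a, v_j⟩ = ⟨x, v_j⟩ ≥ 0` on `σ^∨`,
or `⟨p - c • a, v_j⟩ ≥ (l - c) ⟨a, v_j⟩ > 0`, an open condition; hence `x ∈ c • P(A)` for all
`x ∈ σ^∨` near `p`. As `∂Q(B)` lies in the closure of `σ^∨ \ Q(B)`, the two suprema agree.
They are finite: if `0 ∉ A`, integrality and linear independence give `⟨a, ∑ v_j⟩ ≥ 1` on `A`,
so `λ_A(u) ≤ ⟨u, ∑ v_j⟩`; if `0 ∈ A`, `λ_A` vanishes on `σ^∨`.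
-/

open Topology

lemma pair_eq_dotProduct (u w : Fin d → ℝ) : pair u w = u ⬝ᵥ w := rfl

section DualCone

variable {v : Fin n → Fin d → ℤ} {u w : Fin d → ℝ}

lemma toR_mem_cone (v : Fin n → Fin d → ℤ) (j : Fin n) : toR (v j) ∈ cone v :=
  ⟨Pi.single j 1, fun i => by rw [Pi.single_apply]; split_ifs <;> norm_num,
    by simp [Pi.single_apply]⟩

lemma sum_mem_cone (v : Fin n → Fin d → ℤ) : ∑ j, toR (v j) ∈ cone v :=
  ⟨1, fun _ => zero_le_one, by simp⟩

lemma mem_dualCone_iff : u ∈ dualCone v ↔ ∀ j, 0 ≤ u ⬝ᵥ toR (v j) := by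
  refine ⟨fun hu j => hu _ (toR_mem_cone v j), ?_⟩
  rintro hu _ ⟨c, hc, rfl⟩
  rw [pair_eq_dotProduct, dotProduct_sum]
  exact Finset.sum_nonneg fun j _ => by
    rw [dotProduct_smul, smul_eq_mul]; exact mul_nonneg (hc j) (hu j)

lemma add_mem_dualCone (hu : u ∈ dualCone v) (hw : w ∈ dualCone v) : u + w ∈ dualCone v := by
  rw [mem_dualCone_iff] at *
  exact fun j => by rw [add_dotProduct]; exact add_nonneg (hu j) (hw j)

lemma smul_mem_dualCone {c : ℝ} (hc : 0 ≤ c) (hu : u ∈ dualCone v) : c • u ∈ dualCone v := by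
  rw [mem_dualCone_iff] at *
  exact fun j => by rw [smul_dotProduct, smul_eq_mul]; exact mul_nonneg hc (hu j)

lemma convex_dualCone : Convex ℝ (dualCone v) :=
  fun _ hx _ hy _ _ ha hb _ => add_mem_dualCone (smul_mem_dualCone ha hx) (smul_mem_dualCone hb hy)

lemma isClosed_dualCone : IsClosed (dualCone v) := by
  have : dualCone v = ⋂ j, {u | 0 ≤ u ⬝ᵥ toR (v j)} := by ext; simp [mem_dualCone_iff]
  rw [this]
  exact isClosed_iInter fun j =>
    isClosed_le continuous_const (continuous_id.dotProduct continuous_const)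

lemma isClosed_QSet (B : Finset (Fin d → ℤ)) : IsClosed (QSet v B) :=
  B.finite_toSet.isClosed_biUnion fun b _ => isClosed_dualCone.vadd (toR b)

end DualCone

section Simplicial

variable {v : Fin d → Fin d → ℤ}

lemma isUnit_of_linearIndependent (hli : LinearIndependent ℝ fun j => toR (v j)) :
    IsUnit (Matrix.of fun j i => (v j i : ℝ)) :=
  Matrix.linearIndependent_rows_iff_isUnit.mp hli

lemma eq_zero_of_forall_dotProduct_eq_zero (hli : LinearIndependent ℝ fun j => toR (v j))
    {u : Fin d → ℝ} (hu : ∀ j, u ⬝ᵥ toR (v j) = 0) : u = 0 := by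
  refine Matrix.mulVec_injective_iff_isUnit.mpr (isUnit_of_linearIndependent hli) ?_
  ext j
  rw [Matrix.mulVec_zero]
  exact (dotProduct_comm _ _).trans (hu j)

lemma exists_forall_dotProduct_eq_one (hli : LinearIndependent ℝ fun j => toR (v j)) :
    ∃ e : Fin d → ℝ, ∀ j, e ⬝ᵥ toR (v j) = 1 := by
  obtain ⟨e, he⟩ := Matrix.mulVec_surjective_iff_isUnit.mpr (isUnit_of_linearIndependent hli) 1
  exact ⟨e, fun j => (dotProduct_comm _ _).trans (congrFun he j)⟩

lemma one_le_dotProduct_sum (hli : LinearIndependent ℝ fun j => toR (v j)) {a : Fin d → ℤ}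
    (ha : toR a ∈ dualCone v) (ha0 : a ≠ 0) : 1 ≤ toR a ⬝ᵥ ∑ j, toR (v j) := by
  have hne : toR a ⬝ᵥ ∑ j, toR (v j) ≠ 0 := by
    rw [dotProduct_sum]
    intro h
    have hterms := (Finset.sum_eq_zero_iff_of_nonneg fun j _ => mem_dualCone_iff.mp ha j).mp h
    have := eq_zero_of_forall_dotProduct_eq_zero hli fun j => hterms j (Finset.mem_univ j)
    exact ha0 (funext fun i => by simpa [toR] using congrFun this i)
  obtain ⟨k, hk⟩ : ∃ k : ℤ, toR a ⬝ᵥ ∑ j, toR (v j) = k :=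
    ⟨a ⬝ᵥ ∑ j, v j, by simp [toR, dotProduct, Finset.sum_apply]⟩
  have hnn : 0 ≤ toR a ⬝ᵥ ∑ j, toR (v j) := ha _ (sum_mem_cone v)
  rw [hk] at hne hnn ⊢
  have : 0 < k := by exact_mod_cast hnn.lt_of_ne' hne
  exact_mod_cast (by omega : (1 : ℤ) ≤ k)

end Simplicial

section Newton

variable {v : Fin n → Fin d → ℤ} {A : Finset (Fin d → ℤ)} {u w : Fin d → ℝ} {l : ℝ}

lemma mem_smul_newton_iff (hl : 0 < l) :
    u ∈ l • newton v A ↔ ∃ a ∈ convexHull ℝ (toR '' ↑A), u - l • a ∈ dualCone v := by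
  rw [Set.mem_smul_set]
  constructor
  · rintro ⟨_, ⟨a, ha, y, hy, rfl⟩, rfl⟩
    exact ⟨a, ha, by simpa [smul_add] using smul_mem_dualCone hl.le hy⟩
  · rintro ⟨a, ha, hu⟩
    refine ⟨a + l⁻¹ • (u - l • a), ⟨a, ha, _, smul_mem_dualCone (inv_nonneg.2 hl.le) hu, rfl⟩, ?_⟩
    rw [smul_add, smul_inv_smul₀ hl.ne', add_sub_cancel]

lemma add_mem_smul_newton (hl : 0 < l) (hu : u ∈ l • newton v A) (hw : w ∈ dualCone v) :
    u + w ∈ l • newton v A := by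
  obtain ⟨a, ha, hua⟩ := (mem_smul_newton_iff hl).mp hu
  refine (mem_smul_newton_iff hl).mpr ⟨a, ha, ?_⟩
  simpa [add_sub_right_comm] using add_mem_dualCone hua hw

lemma convexHull_subset_dualCone (hAl : ∀ a ∈ A, toR a ∈ dualCone v) :
    convexHull ℝ (toR '' ↑A) ⊆ dualCone v :=
  convexHull_min (Set.image_subset_iff.mpr hAl) convex_dualCone

lemma eventually_mem_smul_newton (hAl : ∀ a ∈ A, toR a ∈ dualCone v) {p : Fin d → ℝ} {c : ℝ}
    (hc : 0 < c) (hcl : c < l) (hp : p ∈ l • newton v A) :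
    ∀ᶠ x in 𝓝[dualCone v] p, x ∈ c • newton v A := by
  obtain ⟨a, ha, hpa⟩ := (mem_smul_newton_iff (hc.trans hcl)).mp hp
  have haσ := mem_dualCone_iff.mp (convexHull_subset_dualCone hAl ha)
  have hcoord : ∀ j, ∀ᶠ x in 𝓝[dualCone v] p, 0 ≤ (x - c • a) ⬝ᵥ toR (v j) := by
    intro j
    rcases (haσ j).eq_or_lt with h | h
    · filter_upwards [self_mem_nhdsWithin] with x hx
      rw [sub_dotProduct, smul_dotProduct, ← h, smul_zero, sub_zero]
      exact mem_dualCone_iff.mp hx j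
    · have hpos : 0 < (p - c • a) ⬝ᵥ toR (v j) := by
        have := mem_dualCone_iff.mp hpa j
        simp only [sub_dotProduct, smul_dotProduct, smul_eq_mul] at this ⊢
        nlinarith
      have hcont : Continuous fun x => (x - c • a) ⬝ᵥ toR (v j) :=
        (continuous_id.sub continuous_const).dotProduct continuous_const
      exact nhdsWithin_le_nhds <| (hcont.continuousAt.eventually (eventually_gt_nhds hpos)).mono
        fun _ hx => hx.le
  filter_upwards [Filter.eventually_all.mpr hcoord] with x hx
  exact (mem_smul_newton_iff hc).mpr ⟨a, ha, mem_dualCone_iff.mpr hx⟩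

lemma lam_nonneg (v : Fin n → Fin d → ℤ) (A : Finset (Fin d → ℤ)) (u : Fin d → ℝ) :
    0 ≤ lam v A u :=
  Real.sSup_nonneg fun _ hl => hl.1.le

lemma sSup_lam_image_nonneg (T : Set (Fin d → ℝ)) : 0 ≤ sSup (lam v A '' T) :=
  Real.sSup_nonneg (Set.forall_mem_image.mpr fun _ _ => lam_nonneg v A _)

/-- Here `λ_A` is really `+∞`; it is `0` only through the convention `sSup (Ioi 0) = 0`. -/
lemma lam_eq_zero_of_zero_mem (h0 : 0 ∈ A) (hu : u ∈ dualCone v) : lam v A u = 0 := by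
  have hall : {l : ℝ | 0 < l ∧ u ∈ l • newton v A} = Set.Ioi 0 := by
    ext l
    refine ⟨And.left, fun hl => ⟨hl, (mem_smul_newton_iff hl).mpr ⟨0, ?_, by simpa using hu⟩⟩⟩
    exact subset_convexHull ℝ _ ⟨0, h0, funext fun _ => Int.cast_zero⟩
  rw [lam, hall]
  exact Real.sSup_of_not_bddAbove (not_bddAbove_Ioi 0)

lemma sSup_lam_image_eq_zero (h0 : 0 ∈ A) {T : Set (Fin d → ℝ)} (hT : T ⊆ dualCone v) :
    sSup (lam v A '' T) = 0 :=
  le_antisymm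
    (Real.sSup_nonpos <| Set.forall_mem_image.mpr fun _ hu =>
      (lam_eq_zero_of_zero_mem h0 (hT hu)).le)
    (sSup_lam_image_nonneg T)

end Newton

section Bounded

variable {v : Fin n → Fin d → ℤ} {A : Finset (Fin d → ℤ)} {ν : Fin d → ℝ}
  (hν : ν ∈ cone v) (hA : ∀ a ∈ A, 1 ≤ toR a ⬝ᵥ ν)
include hν hA

lemma le_dotProduct_of_mem_smul_newton {u : Fin d → ℝ} {l : ℝ} (hl : 0 < l)
    (hu : u ∈ l • newton v A) : l ≤ u ⬝ᵥ ν := by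
  obtain ⟨a, ha, hua⟩ := (mem_smul_newton_iff hl).mp hu
  have hlin : IsLinearMap ℝ fun x : Fin d → ℝ => x ⬝ᵥ ν :=
    ⟨fun x y => add_dotProduct x y ν, fun c x => smul_dotProduct c x ν⟩
  have h1 : 1 ≤ a ⬝ᵥ ν :=
    convexHull_min (t := {x | 1 ≤ x ⬝ᵥ ν}) (Set.image_subset_iff.mpr hA)
      (convex_halfSpace_ge hlin 1) ha
  have h2 : 0 ≤ (u - l • a) ⬝ᵥ ν := hua ν hν
  rw [sub_dotProduct, smul_dotProduct, smul_eq_mul] at h2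
  nlinarith

lemma le_lam {u : Fin d → ℝ} {l : ℝ} (hl : 0 < l) (hu : u ∈ l • newton v A) : l ≤ lam v A u :=
  le_csSup ⟨u ⬝ᵥ ν, fun _ hl' => le_dotProduct_of_mem_smul_newton hν hA hl'.1 hl'.2⟩ ⟨hl, hu⟩

lemma lam_le_dotProduct {u : Fin d → ℝ} (hu : u ∈ dualCone v) : lam v A u ≤ u ⬝ᵥ ν :=
  Real.sSup_le (fun _ hl => le_dotProduct_of_mem_smul_newton hν hA hl.1 hl.2) (hu ν hν)

lemma lam_le_lam_add {u w : Fin d → ℝ} (hw : w ∈ dualCone v) : lam v A u ≤ lam v A (u + w) :=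
  Real.sSup_le (fun _ hl => le_lam hν hA hl.1 (add_mem_smul_newton hl.1 hl.2 hw))
    (lam_nonneg v A _)

lemma bddAbove_lam_image {T : Set (Fin d → ℝ)} (hT : Bornology.IsBounded T)
    (hTσ : T ⊆ dualCone v) : BddAbove (lam v A '' T) := by
  obtain ⟨C, hC⟩ := hT.isCompact_closure.bddAbove_image
    (continuous_id.dotProduct continuous_const).continuousOn (f := fun x => x ⬝ᵥ ν)
  exact ⟨C, Set.forall_mem_image.mpr fun u hu =>
    (lam_le_dotProduct hν hA (hTσ hu)).trans (hC ⟨u, subset_closure hu, rfl⟩)⟩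

lemma lam_le_sSup_of_mem_closure (hAl : ∀ a ∈ A, toR a ∈ dualCone v) {S : Set (Fin d → ℝ)}
    (hS : S ⊆ dualCone v) (hSb : BddAbove (lam v A '' S)) {p : Fin d → ℝ} (hp : p ∈ closure S) :
    lam v A p ≤ sSup (lam v A '' S) := by
  refine Real.sSup_le (fun l hl => le_of_forall_lt_imp_le_of_dense fun c hcl => ?_)
    (sSup_lam_image_nonneg S)
  rcases le_or_gt c 0 with hc | hc
  · exact hc.trans (sSup_lam_image_nonneg S)
  have : (𝓝[S] p).NeBot := mem_closure_iff_nhdsWithin_neBot.mp hp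
  obtain ⟨x, hxc, hxS⟩ := (((eventually_mem_smul_newton hAl hc hcl hl.2).filter_mono
    (nhdsWithin_mono p hS)).and self_mem_nhdsWithin).exists
  exact (le_lam hν hA hc hxc).trans (le_csSup hSb ⟨x, hxS, rfl⟩)

end Bounded

lemma exists_add_smul_mem_boundaryIn {X s : Set (Fin d → ℝ)} (hs : IsClosed s)
    (hbdd : Bornology.IsBounded (X \ s)) {u e : Fin d → ℝ} (hu : u ∈ X \ s) (he : e ≠ 0)
    (hray : ∀ t : ℝ, 0 ≤ t → u + t • e ∈ X) : ∃ t : ℝ, 0 ≤ t ∧ u + t • e ∈ boundaryIn X s := by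
  set K : Set ℝ := {t : ℝ | 0 ≤ t ∧ u + t • e ∈ s}
  have hcont : Continuous fun t : ℝ => u + t • e := by fun_prop
  have hKne : K.Nonempty := by
    obtain ⟨C, hC⟩ := hbdd.exists_norm_le
    have hC0 : 0 ≤ C := (norm_nonneg u).trans (hC u hu)
    set t := (C + ‖u‖ + 1) / ‖e‖
    have ht : 0 ≤ t := by positivity
    refine ⟨t, ht, by_contra fun hts => ?_⟩
    have hfar : ‖t • e‖ = C + ‖u‖ + 1 := by
      rw [norm_smul, Real.norm_of_nonneg ht, div_mul_cancel₀ _ (norm_ne_zero_iff.mpr he)]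
    have htri := norm_sub_le (u + t • e) u
    rw [add_sub_cancel_left, hfar] at htri
    linarith [hC _ ⟨hray t ht, hts⟩]
  have hKbdd : BddBelow K := ⟨0, fun _ ht => ht.1⟩
  have hKclosed : IsClosed K := isClosed_Ici.inter (hs.preimage hcont)
  obtain ⟨ht0, hts⟩ := hKclosed.csInf_mem hKne hKbdd
  have hpos : 0 < sInf K := ht0.lt_of_ne fun h => hu.2 (by rwa [← h, zero_smul, add_zero] at hts)
  have hbefore : ∀ᶠ t in 𝓝[<] sInf K, u + t • e ∈ X \ s := by
    filter_upwards [Ioo_mem_nhdsLT hpos] with t ht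
    exact ⟨hray t ht.1.le, fun h => notMem_of_lt_csInf ht.2 hKbdd ⟨ht.1.le, h⟩⟩
  exact ⟨sInf K, ht0, ⟨hray _ ht0, subset_closure hts⟩,
    mem_closure_of_tendsto ((hcont.tendsto _).mono_left nhdsWithin_le_nhds) hbefore⟩

theorem sup_lam_eq_sup_boundary_general
    (d : ℕ) (hd : 1 ≤ d)
    (v : Fin d → Fin d → ℤ)
    (hli : LinearIndependent ℝ fun j => toR (v j))
    (A B : Finset (Fin d → ℤ))
    (hAl : ∀ a ∈ A, toR a ∈ dualCone v)
    (hbdd : Bornology.IsBounded (dualCone v \ QSet v B)) :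
    sSup (lam v A '' (dualCone v \ QSet v B)) =
      sSup (lam v A '' boundaryIn (dualCone v) (QSet v B)) := by
  set S := dualCone v \ QSet v B
  have hSσ : S ⊆ dualCone v := Set.sdiff_subset
  have hFS : boundaryIn (dualCone v) (QSet v B) ⊆ closure S := fun _ hp => hp.2
  have hFσ : boundaryIn (dualCone v) (QSet v B) ⊆ dualCone v := fun _ hp => hp.1.1
  by_cases h0 : (0 : Fin d → ℤ) ∈ A
  · rw [sSup_lam_image_eq_zero h0 hSσ, sSup_lam_image_eq_zero h0 hFσ]
  have hA : ∀ a ∈ A, 1 ≤ toR a ⬝ᵥ ∑ j, toR (v j) := fun a ha =>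
    one_le_dotProduct_sum hli (hAl a ha) fun h => h0 (h ▸ ha)
  have hν := sum_mem_cone v
  obtain ⟨e, he⟩ := exists_forall_dotProduct_eq_one hli
  have heσ : e ∈ dualCone v := mem_dualCone_iff.mpr fun j => (he j).symm ▸ zero_le_one
  have he0 : e ≠ 0 := fun h => by simpa [h] using he ⟨0, hd⟩
  have hFb := bddAbove_lam_image hν hA ((hbdd.closure).subset hFS) hFσ
  apply le_antisymm
  · refine Real.sSup_le (Set.forall_mem_image.mpr fun u hu => ?_) (sSup_lam_image_nonneg _)
    obtain ⟨t, ht, hp⟩ := exists_add_smul_mem_boundaryIn (isClosed_QSet B) hbdd hu he0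
      fun t ht => add_mem_dualCone hu.1 (smul_mem_dualCone ht heσ)
    exact (lam_le_lam_add hν hA (smul_mem_dualCone ht heσ)).trans
      (le_csSup hFb (Set.mem_image_of_mem _ hp))
  · exact Real.sSup_le (Set.forall_mem_image.mpr fun p hp => lam_le_sSup_of_mem_closure hν hA hAl
      hSσ (bddAbove_lam_image hν hA hbdd hSσ) (hFS hp)) (sSup_lam_image_nonneg _)

/-- the supremum of `λ_A` over `σ^∨ \ Q(B)` equals its supremum
over the boundary `∂Q(B)` of `Q(B)` in the subspace topology of `σ^∨`. -/
theorem sup_lam_eq_sup_boundary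
    (d : ℕ) (hd : 1 ≤ d)
    (v : Fin d → Fin d → ℤ)
    (hsc : StronglyConvex v) (hprim : ∀ j, IsPrimitive (v j))
    (hli : LinearIndependent ℝ fun j => toR (v j))
    (A B : Finset (Fin d → ℤ)) (hAne : A.Nonempty) (hBne : B.Nonempty)
    (hAl : ∀ a ∈ A, toR a ∈ dualCone v) (hBl : ∀ b ∈ B, toR b ∈ dualCone v)
    (hbdd : Bornology.IsBounded (dualCone v \ QSet v B)) :
    sSup (lam v A '' (dualCone v \ QSet v B)) =
      sSup (lam v A '' boundaryIn (dualCone v) (QSet v B)) :=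
  sup_lam_eq_sup_boundary_general d hd v hli A B hAl hbdd

end Paper
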